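/- arXiv:2302.03981 — 2 statements merged into one kernel-verified Lean document; each statement's English description precedes it below -/
import Mathlib

section
/- Let α ∈ (0,1), let u ∈ C²_b(ℝ) (bounded with bounded first and second derivatives) and let φ ∈ C_c^∞(ℝ). Then ∫_ℝ φ(x) ∂ₓ𝒟^α[u](x) dx = ∫_ℝ ∂ₓ𝓓̄^α[φ](x) u(x) dx. -/
open MeasureTheory Real

noncomputable section

/-- Right Weyl–Marchaud fractional derivative of order `α`:
`𝒟^α[g](x) = (1/Γ(-α)) ∫_{-∞}^0 (g(x+z) - g(x))/|z|^{α+1} dz`. -/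
def WM (α : ℝ) (g : ℝ → ℝ) (x : ℝ) : ℝ :=
  (Real.Gamma (-α))⁻¹ * ∫ z in Set.Iio (0:ℝ), (g (x + z) - g x) / |z| ^ (α + 1)

/-- The counterpart operator
`𝓓̄^α[g](x) = -(1/Γ(-α)) ∫_0^∞ (g(x+z) - g(x))/|z|^{α+1} dz`. -/
def WMbar (α : ℝ) (g : ℝ → ℝ) (x : ℝ) : ℝ :=
  -(Real.Gamma (-α))⁻¹ * ∫ z in Set.Ioi (0:ℝ), (g (x + z) - g x) / |z| ^ (α + 1)

namespace WMaux

open Set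

lemma div_abs_le {a b D : ℝ} (h : |a| ≤ b) (hD : 0 ≤ D) : |a / D| ≤ b / D := by
  rcases eq_or_lt_of_le hD with rfl | hD'
  · simp
  · rw [abs_div, abs_of_pos hD']
    gcongr

lemma denom_cont {α : ℝ} (hα : 0 < α) : Continuous fun z : ℝ => |z| ^ (α + 1) :=
  (Real.continuous_rpow_const (by linarith)).comp continuous_abs

lemma psi_integrable {α : ℝ} (hα : α ∈ Set.Ioo (0:ℝ) 1) {L M : ℝ} (hL : 0 ≤ L) (hM : 0 ≤ M) :
    Integrable (fun z : ℝ => min (L * |z|) M / |z| ^ (α + 1)) := by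
  obtain ⟨hα0, hα1⟩ := hα
  set ψ : ℝ → ℝ := fun z => min (L * |z|) M / |z| ^ (α + 1) with hψ
  have hmeas : Measurable ψ :=
    ((measurable_const.mul measurable_abs).min measurable_const).div
      (denom_cont hα0).measurable
  have hnonneg : ∀ z, 0 ≤ ψ z := fun z =>
    div_nonneg (le_min (by positivity) hM) (Real.rpow_nonneg (abs_nonneg z) _)
  have i1 : IntegrableOn (fun z : ℝ => L * z ^ (-α)) (Ioc (0:ℝ) 1) := by
    have h := intervalIntegral.intervalIntegrable_rpow' (a := 0) (b := 1) (r := -α)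
      (by linarith)
    rw [intervalIntegrable_iff, uIoc_of_le (zero_le_one)] at h
    exact h.const_mul L
  have hIoc : IntegrableOn ψ (Ioc (0:ℝ) 1) := by
    refine i1.mono' hmeas.aestronglyMeasurable.restrict ?_
    filter_upwards [ae_restrict_mem measurableSet_Ioc] with z hz
    have hz0 : 0 < z := hz.1
    have habs : |z| = z := abs_of_pos hz0
    have hd : (0:ℝ) < z ^ (α + 1) := Real.rpow_pos_of_pos hz0 _
    rw [Real.norm_eq_abs, abs_of_nonneg (hnonneg z)]
    have key : z ^ (-α) * z ^ (α + 1) = z := by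
      rw [← Real.rpow_add hz0, show -α + (α + 1) = 1 by ring, Real.rpow_one]
    simp only [hψ, habs]
    rw [div_le_iff₀ hd]
    calc min (L * z) M ≤ L * z := min_le_left _ _
      _ = L * (z ^ (-α) * z ^ (α + 1)) := by rw [key]
      _ = L * z ^ (-α) * z ^ (α + 1) := by ring
  have i2 : IntegrableOn (fun z : ℝ => M * z ^ (-(α + 1))) (Ioi (1:ℝ)) :=
    (integrableOn_Ioi_rpow_of_lt (by linarith) one_pos).const_mul M
  have hIoi : IntegrableOn ψ (Ioi (1:ℝ)) := by
    refine i2.mono' hmeas.aestronglyMeasurable.restrict ?_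
    filter_upwards [ae_restrict_mem measurableSet_Ioi] with z hz
    have hz0 : (0:ℝ) < z := lt_trans one_pos hz
    have habs : |z| = z := abs_of_pos hz0
    have hd : (0:ℝ) < z ^ (α + 1) := Real.rpow_pos_of_pos hz0 _
    rw [Real.norm_eq_abs, abs_of_nonneg (hnonneg z)]
    have key : z ^ (-(α + 1)) * z ^ (α + 1) = 1 := by
      rw [← Real.rpow_add hz0, show -(α + 1) + (α + 1) = 0 by ring, Real.rpow_zero]
    simp only [hψ, habs]
    rw [div_le_iff₀ hd]
    calc min (L * z) M ≤ M := min_le_right _ _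
      _ = M * (z ^ (-(α + 1)) * z ^ (α + 1)) := by rw [key]; ring
      _ = M * z ^ (-(α + 1)) * z ^ (α + 1) := by ring
  have hpos : IntegrableOn ψ (Ioi (0:ℝ)) := by
    have := hIoc.union hIoi
    rwa [Ioc_union_Ioi_eq_Ioi zero_le_one] at this
  have hneg : IntegrableOn ψ (Iio (0:ℝ)) := by
    have h_map_neg : (volume.restrict (Ioi (0:ℝ))).map Neg.neg = volume.restrict (Iio 0) := by
      conv => rhs; rw [← Measure.map_neg_eq_self (volume : Measure ℝ),
        measurableEmbedding_neg.restrict_map]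
      simp
    rw [IntegrableOn, ← h_map_neg, measurableEmbedding_neg.integrable_map_iff]
    have : ψ ∘ Neg.neg = ψ := by
      funext z; simp [hψ, Function.comp, abs_neg]
    rw [this]; exact hpos
  have hU : IntegrableOn ψ (Iio 0 ∪ Ioi 0) := hneg.union hpos
  rw [Set.Iio_union_Ioi] at hU
  rw [← integrableOn_univ]
  have he : ({(0:ℝ)}ᶜ : Set ℝ) =ᶠ[ae volume] (univ : Set ℝ) := by
    rw [ae_eq_univ]; simp [compl_compl]
  exact hU.congr_set_ae he.symm

lemma kernel_meas1 {α : ℝ} (hα : 0 < α) {g : ℝ → ℝ} (hg : Continuous g) (x : ℝ) :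
    Measurable fun z : ℝ => (g (x + z) - g x) / |z| ^ (α + 1) :=
  (((hg.comp (continuous_const.add continuous_id)).sub continuous_const).measurable).div
    (denom_cont hα).measurable

lemma kernel_meas2 {α : ℝ} (hα : 0 < α) {g : ℝ → ℝ} (hg : Continuous g) :
    Measurable fun p : ℝ × ℝ => (g (p.1 + p.2) - g p.1) / |p.2| ^ (α + 1) :=
  (((hg.comp (continuous_fst.add continuous_snd)).sub (hg.comp continuous_fst)).measurable).div
    ((denom_cont hα).comp continuous_snd).measurable

lemma kernel_bound {α : ℝ} {g : ℝ → ℝ} {L M : ℝ}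
    (hb : ∀ x z, |g (x + z) - g x| ≤ min (L * |z|) M) (x z : ℝ) :
    |(g (x + z) - g x) / |z| ^ (α + 1)| ≤ min (L * |z|) M / |z| ^ (α + 1) :=
  div_abs_le (hb x z) (Real.rpow_nonneg (abs_nonneg z) _)

lemma kernel_intOn {α : ℝ} (hα : α ∈ Set.Ioo (0:ℝ) 1) {g : ℝ → ℝ} {L M : ℝ}
    (hg : Continuous g) (hL : 0 ≤ L) (hM : 0 ≤ M)
    (hb : ∀ x z, |g (x + z) - g x| ≤ min (L * |z|) M) (S : Set ℝ) (x : ℝ) :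
    IntegrableOn (fun z => (g (x + z) - g x) / |z| ^ (α + 1)) S := by
  refine ((psi_integrable hα hL hM).restrict).mono'
    ((kernel_meas1 hα.1 hg x).aestronglyMeasurable) ?_
  exact Filter.Eventually.of_forall fun z => by
    simpa only [Real.norm_eq_abs] using kernel_bound (α := α) hb x z

lemma hasDeriv_param {α : ℝ} (hα : α ∈ Set.Ioo (0:ℝ) 1) (S : Set ℝ)
    {g g' : ℝ → ℝ} (hgc : Continuous g) (hg'c : Continuous g')
    (hgd : ∀ x, HasDerivAt g (g' x) x)
    {L M L' M' : ℝ} (hL : 0 ≤ L) (hM : 0 ≤ M) (hL' : 0 ≤ L') (hM' : 0 ≤ M')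
    (hb : ∀ x z, |g (x + z) - g x| ≤ min (L * |z|) M)
    (hb' : ∀ x z, |g' (x + z) - g' x| ≤ min (L' * |z|) M') (x₀ : ℝ) :
    HasDerivAt (fun x => ∫ z in S, (g (x + z) - g x) / |z| ^ (α + 1))
      (∫ z in S, (g' (x₀ + z) - g' x₀) / |z| ^ (α + 1)) x₀ := by
  have hdiff : ∀ z : ℝ, ∀ x ∈ Metric.ball x₀ 1,
      HasDerivAt (fun x => (g (x + z) - g x) / |z| ^ (α + 1))
        ((g' (x + z) - g' x) / |z| ^ (α + 1)) x := by
    intro z x _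
    have h1 : HasDerivAt (fun x => g (x + z)) (g' (x + z)) x :=
      HasDerivAt.comp_add_const x z (hgd (x + z))
    exact (h1.sub (hgd x)).div_const _
  exact (hasDerivAt_integral_of_dominated_loc_of_deriv_le (μ := volume.restrict S)
    (F := fun x z => (g (x + z) - g x) / |z| ^ (α + 1))
    (F' := fun x z => (g' (x + z) - g' x) / |z| ^ (α + 1))
    (bound := fun z => min (L' * |z|) M' / |z| ^ (α + 1))
    (Metric.ball_mem_nhds x₀ one_pos)
    (Filter.Eventually.of_forall fun x => (kernel_meas1 hα.1 hgc x).aestronglyMeasurable)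
    (kernel_intOn hα hgc hL hM hb S x₀)
    ((kernel_meas1 hα.1 hg'c x₀).aestronglyMeasurable)
    (Filter.Eventually.of_forall fun z x hx => by
      simpa only [Real.norm_eq_abs] using kernel_bound (α := α) hb' x z)
    ((psi_integrable hα hL' hM').restrict)
    (Filter.Eventually.of_forall fun z x hx => hdiff z x hx)).2

lemma cont_param {α : ℝ} (hα : α ∈ Set.Ioo (0:ℝ) 1) (S : Set ℝ)
    {g : ℝ → ℝ} (hgc : Continuous g) {L M : ℝ} (hL : 0 ≤ L) (hM : 0 ≤ M)
    (hb : ∀ x z, |g (x + z) - g x| ≤ min (L * |z|) M) :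
    Continuous fun x => ∫ z in S, (g (x + z) - g x) / |z| ^ (α + 1) := by
  refine continuous_of_dominated
    (fun x => (kernel_meas1 hα.1 hgc x).aestronglyMeasurable)
    (fun x => Filter.Eventually.of_forall fun z => by
      simpa only [Real.norm_eq_abs] using kernel_bound (α := α) hb x z)
    ((psi_integrable hα hL hM).restrict) ?_
  refine Filter.Eventually.of_forall fun z => ?_
  exact ((hgc.comp (continuous_id.add continuous_const)).sub hgc).div_const _

lemma swap_lemma {α : ℝ} (hα : α ∈ Set.Ioo (0:ℝ) 1)
    {f g : ℝ → ℝ} (hf : Continuous f) (hfc : HasCompactSupport f)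
    {Lf Mf : ℝ} (hLf : 0 ≤ Lf) (hMf : 0 ≤ Mf)
    (hfb : ∀ x z, |f (x + z) - f x| ≤ min (Lf * |z|) Mf)
    (hg : Continuous g) {Lg Mg Mgb : ℝ} (hLg : 0 ≤ Lg) (hMg : 0 ≤ Mg)
    (hgb : ∀ x z, |g (x + z) - g x| ≤ min (Lg * |z|) Mg)
    (hgM : ∀ x, |g x| ≤ Mgb) :
    ∫ x : ℝ, f x * (∫ z in Set.Iio (0:ℝ), (g (x + z) - g x) / |z| ^ (α + 1)) =
      ∫ x : ℝ, (∫ z in Set.Ioi (0:ℝ), (f (x + z) - f x) / |z| ^ (α + 1)) * g x := by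
  have hMgb0 : 0 ≤ Mgb := (abs_nonneg (g 0)).trans (hgM 0)
  have hfi : Integrable f := hf.integrable_of_hasCompactSupport hfc
  -- support radius
  obtain ⟨r, hr⟩ := hfc.isBounded.subset_closedBall 0
  set R := max r 0 with hRdef
  have hR0 : 0 ≤ R := le_max_right _ _
  have hRsupp : tsupport f ⊆ Icc (-R) R := by
    intro x hx
    have h1 := hr hx
    rw [Real.closedBall_eq_Icc] at h1
    have h2 : -r ≤ x ∧ x ≤ r := by simpa using h1
    exact ⟨by have := le_max_left r 0; linarith [h2.1], (h2.2.trans (le_max_left r 0))⟩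
  set If := ∫ x : ℝ, |f x| with hIfdef
  have hIf0 : 0 ≤ If := integral_nonneg fun x => abs_nonneg _
  set C2 := 2 * Mgb * If with hC2def
  have hC20 : 0 ≤ C2 := by positivity
  set C1 := max (Lf * (2 * (R + 1)) * Mgb) C2 with hC1def
  have hC10 : 0 ≤ C1 := hC20.trans (le_max_right _ _)
  -- integrability facts for fixed z
  have hfz_int : ∀ z : ℝ, Integrable fun x => f (x - z) := fun z =>
    (hf.comp (continuous_id.sub continuous_const)).integrable_of_hasCompactSupport
      (hfc.comp_homeomorph (Homeomorph.subRight z))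
  have hsub : ∀ z : ℝ, HasCompactSupport fun x : ℝ => f (x - z) - f x := by
    intro z
    have h1 : HasCompactSupport (f ∘ (Homeomorph.subRight z)) := hfc.comp_homeomorph _
    have h2 : HasCompactSupport (Neg.neg ∘ f) := hfc.comp_left neg_zero
    have h3 := h1.add h2
    simpa [sub_eq_add_neg, Function.comp_def, Pi.add_def] using h3
  have hint0 : ∀ z : ℝ, Integrable fun x => (f (x - z) - f x) * g x := fun z =>
    (((hf.comp (continuous_id.sub continuous_const)).sub hf).mul hg).integrable_of_hasCompactSupport
      ((hsub z).mul_right)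
  have hint : ∀ z : ℝ, Integrable fun x => |f (x - z) - f x| * |g x| := fun z => by
    simpa [abs_mul] using (hint0 z).abs
  have hshift : ∀ z : ℝ, (∫ x : ℝ, |f (x - z)|) = If := fun z =>
    integral_sub_right_eq_self (fun y => |f y|) z
  -- the main estimate
  have hest : ∀ z : ℝ, z < 0 → (∫ x : ℝ, |f (x - z) - f x| * |g x|) ≤ min (C1 * |z|) C2 := by
    intro z hz
    have hb2 : (∫ x : ℝ, |f (x - z) - f x| * |g x|) ≤ C2 := by
      have h1 : Integrable fun x : ℝ => (|f (x - z)| + |f x|) * Mgb :=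
        ((hfz_int z).abs.add hfi.abs).mul_const _
      have mono : ∀ x : ℝ, |f (x - z) - f x| * |g x| ≤ (|f (x - z)| + |f x|) * Mgb := fun x =>
        mul_le_mul (abs_sub _ _) (hgM x) (abs_nonneg _) (by positivity)
      calc (∫ x : ℝ, |f (x - z) - f x| * |g x|)
          ≤ ∫ x : ℝ, (|f (x - z)| + |f x|) * Mgb := integral_mono (hint z) h1 mono
        _ = ((∫ x : ℝ, |f (x - z)|) + ∫ x : ℝ, |f x|) * Mgb := by
            rw [integral_mul_const, integral_add (hfz_int z).abs hfi.abs]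
        _ = C2 := by rw [hshift z, ← hIfdef, hC2def]; ring
    have hb1 : |z| ≤ 1 → (∫ x : ℝ, |f (x - z) - f x| * |g x|) ≤ Lf * (2 * (R + 1)) * Mgb * |z| := by
      intro hz1
      have hzneg : -1 ≤ z := by
        have := abs_le.mp hz1; exact this.1
      set s : Set ℝ := Icc (-(R + 1)) (R + 1) with hsdef
      have hpt : ∀ x, |f (x - z) - f x| * |g x| ≤ s.indicator (fun _ => Lf * |z| * Mgb) x := by
        intro x
        by_cases hxs : x ∈ s
        · rw [indicator_of_mem hxs]
          refine mul_le_mul ?_ (hgM x) (abs_nonneg _) (by positivity)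
          have h := (hfb x (-z)).trans (min_le_left _ _)
          simpa [sub_eq_add_neg, abs_neg] using h
        · rw [indicator_of_notMem hxs]
          have hfx : f x = 0 := by
            apply image_eq_zero_of_notMem_tsupport
            intro hmem
            have hx' := hRsupp hmem
            exact hxs ⟨by linarith [hx'.1], by linarith [hx'.2]⟩
          have hfxz : f (x - z) = 0 := by
            apply image_eq_zero_of_notMem_tsupport
            intro hmem
            have hx' := hRsupp hmem
            exact hxs ⟨by linarith [hx'.1], by linarith [hx'.2]⟩
          simp [hfx, hfxz]
      have hind : Integrable (s.indicator fun _ : ℝ => Lf * |z| * Mgb) := by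
        rw [integrable_indicator_iff measurableSet_Icc]
        exact integrableOn_const measure_Icc_lt_top.ne
      calc (∫ x : ℝ, |f (x - z) - f x| * |g x|)
          ≤ ∫ x : ℝ, s.indicator (fun _ => Lf * |z| * Mgb) x := integral_mono (hint z) hind hpt
        _ = (volume s).toReal * (Lf * |z| * Mgb) := by
            rw [integral_indicator measurableSet_Icc, setIntegral_const, smul_eq_mul]
            rfl
        _ = (2 * (R + 1)) * (Lf * |z| * Mgb) := by
            rw [hsdef, Real.volume_Icc, ENNReal.toReal_ofReal (by linarith)]
            ring_nf
        _ = Lf * (2 * (R + 1)) * Mgb * |z| := by ring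
    rcases le_or_gt |z| 1 with h1 | h1
    · refine le_min ((hb1 h1).trans ?_) hb2
      exact mul_le_mul_of_nonneg_right (le_max_left _ _) (abs_nonneg _)
    · refine le_min (hb2.trans ?_) hb2
      calc C2 ≤ C1 := le_max_right _ _
        _ = C1 * 1 := (mul_one _).symm
        _ ≤ C1 * |z| := mul_le_mul_of_nonneg_left h1.le hC10
  -- first product integrability
  have hΦm : AEStronglyMeasurable
      (fun p : ℝ × ℝ => f p.1 * ((g (p.1 + p.2) - g p.1) / |p.2| ^ (α + 1)))
      (volume.prod (volume.restrict (Iio 0))) :=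
    ((hf.measurable.comp measurable_fst).mul (kernel_meas2 hα.1 hg)).aestronglyMeasurable
  have hΦi : Integrable (fun p : ℝ × ℝ => f p.1 * ((g (p.1 + p.2) - g p.1) / |p.2| ^ (α + 1)))
      (volume.prod (volume.restrict (Iio 0))) := by
    have hbig : Integrable (fun p : ℝ × ℝ => |f p.1| * (min (Lg * |p.2|) Mg / |p.2| ^ (α + 1)))
        (volume.prod (volume.restrict (Iio 0))) :=
      hfi.abs.mul_prod ((psi_integrable hα hLg hMg).restrict)
    refine hbig.mono' hΦm (Filter.Eventually.of_forall fun p => ?_)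
    rw [Real.norm_eq_abs, abs_mul]
    exact mul_le_mul_of_nonneg_left (kernel_bound (α := α) hgb p.1 p.2) (abs_nonneg _)
  -- swap 1
  have swap1 : (∫ x : ℝ, f x * (∫ z in Set.Iio (0:ℝ), (g (x + z) - g x) / |z| ^ (α + 1)))
      = ∫ z in Set.Iio (0:ℝ), ∫ x : ℝ, f x * ((g (x + z) - g x) / |z| ^ (α + 1)) := by
    have hrw : ∀ x : ℝ, f x * (∫ z in Set.Iio (0:ℝ), (g (x + z) - g x) / |z| ^ (α + 1))
        = ∫ z in Set.Iio (0:ℝ), f x * ((g (x + z) - g x) / |z| ^ (α + 1)) :=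
      fun x => (integral_const_mul (f x) _).symm
    simp_rw [hrw]
    exact integral_integral_swap hΦi
  -- pointwise in z
  have t2 : Integrable fun x : ℝ => f x * g x :=
    (hf.mul hg).integrable_of_hasCompactSupport hfc.mul_right
  have key : ∀ z : ℝ, (∫ x : ℝ, f x * ((g (x + z) - g x) / |z| ^ (α + 1)))
      = ∫ x : ℝ, ((f (x - z) - f x) * g x) / |z| ^ (α + 1) := by
    intro z
    have t1 : Integrable fun x : ℝ => f x * g (x + z) :=
      (hf.mul (hg.comp (continuous_id.add continuous_const))).integrable_of_hasCompactSupport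
        hfc.mul_right
    have t3 : Integrable fun x : ℝ => f (x - z) * g x :=
      ((hf.comp (continuous_id.sub continuous_const)).mul hg).integrable_of_hasCompactSupport
        ((hfc.comp_homeomorph (Homeomorph.subRight z)).mul_right)
    have htrans : (∫ x : ℝ, f x * g (x + z)) = ∫ x : ℝ, f (x - z) * g x := by
      have h := integral_add_right_eq_self (μ := volume) (fun y => f (y - z) * g y) z
      simpa using h
    calc (∫ x : ℝ, f x * ((g (x + z) - g x) / |z| ^ (α + 1)))
        = (∫ x : ℝ, (f x * g (x + z) - f x * g x)) * (|z| ^ (α + 1))⁻¹ := by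
          rw [← integral_mul_const]
          exact integral_congr_ae (Filter.Eventually.of_forall fun x => by ring)
      _ = ((∫ x : ℝ, f x * g (x + z)) - ∫ x : ℝ, f x * g x) * (|z| ^ (α + 1))⁻¹ := by
          rw [integral_sub t1 t2]
      _ = ((∫ x : ℝ, f (x - z) * g x) - ∫ x : ℝ, f x * g x) * (|z| ^ (α + 1))⁻¹ := by
          rw [htrans]
      _ = (∫ x : ℝ, (f (x - z) * g x - f x * g x)) * (|z| ^ (α + 1))⁻¹ := by
          rw [integral_sub t3 t2]
      _ = ∫ x : ℝ, ((f (x - z) - f x) * g x) / |z| ^ (α + 1) := by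
          rw [← integral_mul_const]
          exact integral_congr_ae (Filter.Eventually.of_forall fun x => by ring)
  -- second product integrability
  have hΨm0 : Measurable (fun p : ℝ × ℝ => ((f (p.1 - p.2) - f p.1) * g p.1) / |p.2| ^ (α + 1)) :=
    ((((hf.comp (continuous_fst.sub continuous_snd)).sub (hf.comp continuous_fst)).mul
      (hg.comp continuous_fst)).measurable).div ((denom_cont hα.1).comp continuous_snd).measurable
  have hΨi : Integrable (fun p : ℝ × ℝ => ((f (p.1 - p.2) - f p.1) * g p.1) / |p.2| ^ (α + 1))
      (volume.prod (volume.restrict (Iio 0))) := by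
    rw [integrable_prod_iff' hΨm0.aestronglyMeasurable]
    constructor
    · refine (ae_restrict_mem measurableSet_Iio).mono fun z _ => ?_
      simpa using (hint0 z).div_const (|z| ^ (α + 1))
    · refine ((psi_integrable hα hC10 hC20).restrict (s := Iio 0)).mono'
        ((hΨm0.norm.stronglyMeasurable.integral_prod_left').aestronglyMeasurable) ?_
      refine (ae_restrict_mem measurableSet_Iio).mono fun z hz => ?_
      have hz' : z < 0 := hz
      have hDpos : (0:ℝ) < |z| ^ (α + 1) :=
        Real.rpow_pos_of_pos (abs_pos.mpr (ne_of_lt hz')) _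
      have hnorm : ∀ x : ℝ, ‖((f (x - z) - f x) * g x) / |z| ^ (α + 1)‖
          = (|f (x - z) - f x| * |g x|) * (|z| ^ (α + 1))⁻¹ := by
        intro x
        rw [Real.norm_eq_abs, abs_div, abs_mul, abs_of_pos hDpos, div_eq_mul_inv]
      rw [Real.norm_eq_abs, abs_of_nonneg (integral_nonneg fun x => norm_nonneg _)]
      simp_rw [hnorm]
      rw [integral_mul_const, div_eq_mul_inv]
      exact mul_le_mul_of_nonneg_right (hest z hz') (inv_nonneg.mpr hDpos.le)
  -- swap 2
  have swap2 : (∫ z in Set.Iio (0:ℝ), ∫ x : ℝ, ((f (x - z) - f x) * g x) / |z| ^ (α + 1))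
      = ∫ x : ℝ, ∫ z in Set.Iio (0:ℝ), ((f (x - z) - f x) * g x) / |z| ^ (α + 1) :=
    (integral_integral_swap hΨi).symm
  -- final pointwise in x
  have final : ∀ x : ℝ, (∫ z in Set.Iio (0:ℝ), ((f (x - z) - f x) * g x) / |z| ^ (α + 1))
      = (∫ z in Set.Ioi (0:ℝ), (f (x + z) - f x) / |z| ^ (α + 1)) * g x := by
    intro x
    have hneg : (∫ z in Set.Ioi (0:ℝ), (f (x + z) - f x) / |z| ^ (α + 1))
        = ∫ z in Set.Iio (0:ℝ), (f (x - z) - f x) / |z| ^ (α + 1) := by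
      have h := integral_comp_neg_Ioi (0:ℝ) (fun z => (f (x - z) - f x) / |z| ^ (α + 1))
      rw [neg_zero] at h
      rw [integral_Iic_eq_integral_Iio] at h
      rw [← h]
      exact integral_congr_ae (Filter.Eventually.of_forall fun z => by
        simp [sub_neg_eq_add, abs_neg])
    calc (∫ z in Set.Iio (0:ℝ), ((f (x - z) - f x) * g x) / |z| ^ (α + 1))
        = (∫ z in Set.Iio (0:ℝ), (f (x - z) - f x) / |z| ^ (α + 1)) * g x := by
          rw [← integral_mul_const]
          exact integral_congr_ae (Filter.Eventually.of_forall fun z => by ring)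
      _ = _ := by rw [← hneg]
  calc (∫ x : ℝ, f x * (∫ z in Set.Iio (0:ℝ), (g (x + z) - g x) / |z| ^ (α + 1)))
      = ∫ z in Set.Iio (0:ℝ), ∫ x : ℝ, f x * ((g (x + z) - g x) / |z| ^ (α + 1)) := swap1
    _ = ∫ z in Set.Iio (0:ℝ), ∫ x : ℝ, ((f (x - z) - f x) * g x) / |z| ^ (α + 1) :=
        integral_congr_ae (Filter.Eventually.of_forall fun z => key z)
    _ = ∫ x : ℝ, ∫ z in Set.Iio (0:ℝ), ((f (x - z) - f x) * g x) / |z| ^ (α + 1) := swap2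
    _ = ∫ x : ℝ, (∫ z in Set.Ioi (0:ℝ), (f (x + z) - f x) / |z| ^ (α + 1)) * g x :=
        integral_congr_ae (Filter.Eventually.of_forall final)

lemma lip_bound {h h' : ℝ → ℝ} (hd : ∀ x, HasDerivAt h (h' x) x) {C : ℝ}
    (hC : ∀ x, |h' x| ≤ C) (x z : ℝ) : |h (x + z) - h x| ≤ C * |z| := by
  have key := Convex.norm_image_sub_le_of_norm_deriv_le (s := (univ : Set ℝ))
    (fun y _ => (hd y).differentiableAt)
    (fun y _ => by rw [Real.norm_eq_abs, (hd y).deriv]; exact hC y)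
    convex_univ (mem_univ x) (mem_univ (x + z))
  simpa [Real.norm_eq_abs] using key

end WMaux

open WMaux

/-- Integration by parts: for `α ∈ (0,1)`, `u ∈ C²_b(ℝ)` and `φ ∈ C_c^∞(ℝ)`,
`∫ φ ∂ₓ𝒟^α[u] = ∫ ∂ₓ𝓓̄^α[φ] u`. -/
theorem integration_by_parts (α : ℝ) (hα : α ∈ Set.Ioo (0:ℝ) 1)
    (u : ℝ → ℝ) (hu : ContDiff ℝ 2 u)
    (hub : ∀ i : ℕ, i ≤ 2 → ∃ C, ∀ x, |iteratedDeriv i u x| ≤ C)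
    (φ : ℝ → ℝ) (hφ : ContDiff ℝ (⊤ : ℕ∞) φ) (hφc : HasCompactSupport φ) :
    ∫ x : ℝ, φ x * deriv (fun y => WM α u y) x =
      ∫ x : ℝ, deriv (fun y => WMbar α φ y) x * u x := by
  obtain ⟨hα0, hα1⟩ := hα
  set c := (Real.Gamma (-α))⁻¹ with hc
  -- facts about u
  have hu2 : ContDiff ℝ ((1 : WithTop ℕ∞) + 1) u := by
    have h12 : ((1 : WithTop ℕ∞) + 1) = 2 := by norm_num
    rw [h12]; exact hu
  have hud : Differentiable ℝ u := (contDiff_succ_iff_deriv.mp hu2).1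
  set u1 := deriv u with hu1def
  have hu1 : ContDiff ℝ (1 : WithTop ℕ∞) u1 := (contDiff_succ_iff_deriv.mp hu2).2.2
  have hu1d : Differentiable ℝ u1 := (contDiff_one_iff_deriv.mp hu1).1
  have hu1c : Continuous u1 := hu1d.continuous
  have hu2c : Continuous (deriv u1) := (contDiff_one_iff_deriv.mp hu1).2
  obtain ⟨C0, hC0⟩ := hub 0 (by norm_num)
  obtain ⟨C1b, hC1b'⟩ := hub 1 (by norm_num)
  obtain ⟨C2b, hC2b'⟩ := hub 2 le_rfl
  rw [iteratedDeriv_zero] at hC0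
  have hC1b : ∀ x, |u1 x| ≤ C1b := by
    intro x; have := hC1b' x; rwa [iteratedDeriv_one] at this
  have hC2b : ∀ x, |deriv u1 x| ≤ C2b := by
    intro x; have := hC2b' x
    rwa [show (2:ℕ) = 1 + 1 from rfl, iteratedDeriv_succ, iteratedDeriv_one] at this
  have hC00 : 0 ≤ C0 := (abs_nonneg _).trans (hC0 0)
  have hC1b0 : 0 ≤ C1b := (abs_nonneg _).trans (hC1b 0)
  have hC2b0 : 0 ≤ C2b := (abs_nonneg _).trans (hC2b 0)
  have hbu : ∀ x z, |u (x + z) - u x| ≤ min (C1b * |z|) (2 * C0) := by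
    intro x z
    refine le_min (lip_bound (fun y => (hud y).hasDerivAt) hC1b x z) ?_
    calc |u (x + z) - u x| ≤ |u (x + z)| + |u x| := abs_sub _ _
      _ ≤ C0 + C0 := add_le_add (hC0 _) (hC0 _)
      _ = 2 * C0 := by ring
  have hbu1 : ∀ x z, |u1 (x + z) - u1 x| ≤ min (C2b * |z|) (2 * C1b) := by
    intro x z
    refine le_min (lip_bound (fun y => (hu1d y).hasDerivAt) hC2b x z) ?_
    calc |u1 (x + z) - u1 x| ≤ |u1 (x + z)| + |u1 x| := abs_sub _ _
      _ ≤ C1b + C1b := add_le_add (hC1b _) (hC1b _)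
      _ = 2 * C1b := by ring
  -- facts about φ
  have φc : Continuous φ := hφ.continuous
  have hφinf : ContDiff ℝ ((⊤ : ℕ∞) : WithTop ℕ∞) φ := hφ.of_le (by simp)
  have hφdiff : Differentiable ℝ φ := (contDiff_infty_iff_deriv.mp hφinf).1
  set φ1 := deriv φ with hφ1def
  have hφ1top : ContDiff ℝ ((⊤ : ℕ∞) : WithTop ℕ∞) φ1 := (contDiff_infty_iff_deriv.mp hφinf).2
  have hφ1cont : Continuous φ1 := hφ1top.continuous
  have hφ1diff : Differentiable ℝ φ1 := (contDiff_infty_iff_deriv.mp hφ1top).1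
  have hφ2cont : Continuous (deriv φ1) := (contDiff_infty_iff_deriv.mp hφ1top).2.continuous
  have hφ1c : HasCompactSupport φ1 := hφc.deriv
  have hφ2c : HasCompactSupport (deriv φ1) := hφ1c.deriv
  obtain ⟨Mφ, hMφ'⟩ := hφc.exists_bound_of_continuous φc
  obtain ⟨Mφ1, hMφ1'⟩ := hφ1c.exists_bound_of_continuous hφ1cont
  obtain ⟨Mφ2, hMφ2'⟩ := hφ2c.exists_bound_of_continuous hφ2cont
  have hMφ : ∀ x, |φ x| ≤ Mφ := fun x => by simpa [Real.norm_eq_abs] using hMφ' x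
  have hMφ1 : ∀ x, |φ1 x| ≤ Mφ1 := fun x => by simpa [Real.norm_eq_abs] using hMφ1' x
  have hMφ2 : ∀ x, |deriv φ1 x| ≤ Mφ2 := fun x => by simpa [Real.norm_eq_abs] using hMφ2' x
  have hMφ0 : 0 ≤ Mφ := (abs_nonneg _).trans (hMφ 0)
  have hMφ10 : 0 ≤ Mφ1 := (abs_nonneg _).trans (hMφ1 0)
  have hMφ20 : 0 ≤ Mφ2 := (abs_nonneg _).trans (hMφ2 0)
  have hbφ : ∀ x z, |φ (x + z) - φ x| ≤ min (Mφ1 * |z|) (2 * Mφ) := by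
    intro x z
    refine le_min (lip_bound (fun y => (hφdiff y).hasDerivAt) hMφ1 x z) ?_
    calc |φ (x + z) - φ x| ≤ |φ (x + z)| + |φ x| := abs_sub _ _
      _ ≤ Mφ + Mφ := add_le_add (hMφ _) (hMφ _)
      _ = 2 * Mφ := by ring
  have hbφ1 : ∀ x z, |φ1 (x + z) - φ1 x| ≤ min (Mφ2 * |z|) (2 * Mφ1) := by
    intro x z
    refine le_min (lip_bound (fun y => (hφ1diff y).hasDerivAt) hMφ2 x z) ?_
    calc |φ1 (x + z) - φ1 x| ≤ |φ1 (x + z)| + |φ1 x| := abs_sub _ _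
      _ ≤ Mφ1 + Mφ1 := add_le_add (hMφ1 _) (hMφ1 _)
      _ = 2 * Mφ1 := by ring
  -- the auxiliary integrals
  set F : ℝ → ℝ := fun x => ∫ z in Set.Iio (0:ℝ), (u (x + z) - u x) / |z| ^ (α + 1) with hFdef
  set V : ℝ → ℝ := fun x => ∫ z in Set.Iio (0:ℝ), (u1 (x + z) - u1 x) / |z| ^ (α + 1) with hVdef
  set G : ℝ → ℝ := fun x => ∫ z in Set.Ioi (0:ℝ), (φ1 (x + z) - φ1 x) / |z| ^ (α + 1) with hGdef
  -- derivative of WM α u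
  have hWMd : ∀ x, HasDerivAt (fun y => WM α u y) (c * V x) x := by
    intro x
    have h := hasDeriv_param ⟨hα0, hα1⟩ (Set.Iio 0) hud.continuous hu1c
      (fun y => (hud y).hasDerivAt) hC1b0 (by positivity) hC2b0 (by positivity) hbu hbu1 x
    have h2 := h.const_mul c
    simpa only [WM, ← hc, hVdef] using h2
  -- derivative of WMbar α φ
  have hWbard : ∀ x, HasDerivAt (fun y => WMbar α φ y) (-c * G x) x := by
    intro x
    have h := hasDeriv_param ⟨hα0, hα1⟩ (Set.Ioi 0) φc hφ1cont
      (fun y => (hφdiff y).hasDerivAt) hMφ10 (by positivity) hMφ20 (by positivity) hbφ hbφ1 x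
    have h2 := h.const_mul (-c)
    simpa only [WMbar, ← hc, hGdef] using h2
  -- continuity
  have hVcont : Continuous V :=
    cont_param ⟨hα0, hα1⟩ (Set.Iio 0) hu1c hC2b0 (by positivity) hbu1
  have hWMdiff : Differentiable ℝ fun y => WM α u y := fun x => (hWMd x).differentiableAt
  have hWMcont : Continuous fun x => WM α u x := hWMdiff.continuous
  -- integration by parts on the real line
  set h : ℝ → ℝ := fun x => φ x * WM α u x with hhdef
  have hder : ∀ x, HasDerivAt h (φ1 x * WM α u x + φ x * (c * V x)) x := fun x =>
    (hφdiff x).hasDerivAt.mul (hWMd x)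
  have hderiv_eq : deriv h = fun x => φ1 x * WM α u x + φ x * (c * V x) :=
    funext fun x => (hder x).deriv
  have hC1h : ContDiff ℝ 1 h := contDiff_one_iff_deriv.mpr
    ⟨fun x => (hder x).differentiableAt,
      by rw [hderiv_eq]
         exact (hφ1cont.mul hWMcont).add (φc.mul (continuous_const.mul hVcont))⟩
  have hhc : HasCompactSupport h := hφc.mul_right
  have hi1 : Integrable fun x => φ1 x * WM α u x :=
    (hφ1cont.mul hWMcont).integrable_of_hasCompactSupport hφ1c.mul_right
  have hi2 : Integrable fun x => φ x * (c * V x) :=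
    (φc.mul (continuous_const.mul hVcont)).integrable_of_hasCompactSupport hφc.mul_right
  have hint_deriv : Integrable (deriv h) := by
    rw [hderiv_eq]; exact hi1.add hi2
  have hzero : (∫ x : ℝ, deriv h x) = 0 := by
    have h1 := HasCompactSupport.integral_Iic_deriv_eq hC1h hhc 0
    have h2 := HasCompactSupport.integral_Ioi_deriv_eq hC1h hhc 0
    rw [← intervalIntegral.integral_Iic_add_Ioi (b := 0) hint_deriv.integrableOn hint_deriv.integrableOn,
      h1, h2]
    ring
  have hsplit : (∫ x : ℝ, φ x * (c * V x)) = - ∫ x : ℝ, φ1 x * WM α u x := by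
    have hz := hzero
    rw [hderiv_eq, integral_add hi1 hi2] at hz
    linarith
  -- rewrite both sides
  have hLHS : (∫ x : ℝ, φ x * deriv (fun y => WM α u y) x) = ∫ x : ℝ, φ x * (c * V x) :=
    integral_congr_ae (Filter.Eventually.of_forall fun x => by simp only [(hWMd x).deriv])
  have hRHS : (∫ x : ℝ, deriv (fun y => WMbar α φ y) x * u x) = ∫ x : ℝ, (-c * G x) * u x :=
    integral_congr_ae (Filter.Eventually.of_forall fun x => by simp only [(hWbard x).deriv])
  have hWMeq : ∀ x, WM α u x = c * F x := fun x => by simp only [WM, ← hc, hFdef]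
  have hswap : (∫ x : ℝ, φ1 x * F x) = ∫ x : ℝ, G x * u x := by
    have := swap_lemma (α := α) ⟨hα0, hα1⟩ hφ1cont hφ1c hMφ20 (by positivity) hbφ1
      hud.continuous hC1b0 (by positivity) hbu hC0
    simpa only [hFdef, hGdef] using this
  rw [hLHS, hRHS, hsplit]
  calc (- ∫ x : ℝ, φ1 x * WM α u x)
      = -(c * ∫ x : ℝ, φ1 x * F x) := by
        rw [← integral_const_mul]
        congr 1
        exact integral_congr_ae (Filter.Eventually.of_forall fun x => by
          simp only [hWMeq x]; ring)
    _ = -(c * ∫ x : ℝ, G x * u x) := by rw [hswap]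
    _ = ∫ x : ℝ, (-c * G x) * u x := by
        rw [← integral_const_mul, ← integral_neg]
        exact integral_congr_ae (Filter.Eventually.of_forall fun x => by ring)
end
end

section
/- Let α ∈ (0,1) and let g ∈ C²_b(ℝ) (bounded with bounded first and second derivatives). Then for all x ∈ ℝ, ∂ₓ𝒟^α[g](x) = d_{α+2} ∫_{−∞}^0 (g(x+z) − g(x) − g'(x)z)/|z|^{α+2} dz and ∂ₓ𝓓̄^α[g](x) = d_{α+2} ∫_0^∞ (g(x+z) − g(x) − g'(x)z)/|z|^{α+2} dz, where d_{α+2} = 1/Γ(−α−1). -/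
open MeasureTheory Real Set Filter

noncomputable section

lemma meas_abs_rpow (p : ℝ) (hp : 0 ≤ p) : Measurable fun z : ℝ => |z| ^ p :=
  (continuous_abs.rpow_const (fun _ => Or.inr hp)).measurable

lemma keyIoi {α : ℝ} (hα0 : 0 < α) (hα1 : α < 1) {f : ℝ → ℝ} (hm : Measurable f) {C D : ℝ}
    (h1 : ∀ z ∈ Set.Ioo (0:ℝ) 1, |f z| ≤ C * z ^ (-α))
    (h2 : ∀ z ∈ Set.Ici (1:ℝ), |f z| ≤ D * z ^ (-α - 1)) :
    IntegrableOn f (Set.Ioi (0:ℝ)) := by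
  have hu : Set.Ioo (0:ℝ) 1 ∪ Set.Ici 1 = Set.Ioi 0 := Ioo_union_Ici_eq_Ioi zero_lt_one
  rw [← hu]
  apply IntegrableOn.union
  · apply Integrable.mono'
      (((intervalIntegral.integrableOn_Ioo_rpow_iff (s := -α) zero_lt_one).mpr
        (by linarith)).const_mul C)
      hm.aestronglyMeasurable.restrict
    filter_upwards [ae_restrict_mem measurableSet_Ioo] with z hz
    simpa [Real.norm_eq_abs] using h1 z hz
  · rw [integrableOn_Ici_iff_integrableOn_Ioi]
    apply Integrable.mono'
      ((integrableOn_Ioi_rpow_of_lt (a := -α-1) (by linarith) zero_lt_one).const_mul D)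
      hm.aestronglyMeasurable.restrict
    filter_upwards [ae_restrict_mem measurableSet_Ioi] with z hz
    simpa [Real.norm_eq_abs] using h2 z (Set.mem_Ici.mpr (le_of_lt hz))

lemma keyInt {α : ℝ} (hα0 : 0 < α) (hα1 : α < 1) {f : ℝ → ℝ} (hm : Measurable f) {C D : ℝ}
    (h1 : ∀ z : ℝ, z ≠ 0 → |z| ≤ 1 → |f z| ≤ C * |z| ^ (-α))
    (h2 : ∀ z : ℝ, 1 ≤ |z| → |f z| ≤ D * |z| ^ (-α - 1)) :
    IntegrableOn f (Set.Iio (0:ℝ)) ∧ IntegrableOn f (Set.Ioi (0:ℝ)) := by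
  constructor
  · have m : MeasurableEmbedding (fun x : ℝ => -x) := (Homeomorph.neg ℝ).measurableEmbedding
    have key : IntegrableOn (fun z => f (-z)) (Set.Ioi (0:ℝ)) := by
      apply keyIoi hα0 hα1 (hm.comp measurable_neg)
      · intro z hz
        have hze : |(-z)| = z := by rw [abs_neg, abs_of_pos hz.1]
        have h := h1 (-z) (by simp [ne_of_gt hz.1]) (by rw [hze]; exact hz.2.le)
        rwa [hze] at h
      · intro z hz
        have hz0 : (0:ℝ) < z := lt_of_lt_of_le zero_lt_one hz
        have hze : |(-z)| = z := by rw [abs_neg, abs_of_pos hz0]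
        have h := h2 (-z) (by rw [hze]; exact hz)
        rwa [hze] at h
    have hmap : IntegrableOn f (Set.Iio (0:ℝ)) (Measure.map (fun x : ℝ => -x) volume) := by
      rw [m.integrableOn_map_iff]
      have hpre : (fun x : ℝ => -x) ⁻¹' Set.Iio 0 = Set.Ioi 0 := by ext w; simp
      rwa [hpre]
    rwa [Measure.map_neg_eq_self (volume : Measure ℝ)] at hmap
  · apply keyIoi hα0 hα1 hm
    · intro z hz
      have h := h1 z (ne_of_gt hz.1) (by rw [abs_of_pos hz.1]; exact hz.2.le)
      rwa [abs_of_pos hz.1] at h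
    · intro z hz
      have hz0 : (0:ℝ) < z := lt_of_lt_of_le zero_lt_one hz
      have h := h2 z (by rwa [abs_of_pos hz0])
      rwa [abs_of_pos hz0] at h

/-- Integral representations: for `g ∈ C²_b(ℝ)`,
`∂ₓ𝒟^α[g](x) = (1/Γ(-α-1)) ∫_{-∞}^0 (g(x+z) - g(x) - g'(x)z)/|z|^{α+2} dz` and
`∂ₓ𝓓̄^α[g](x) = (1/Γ(-α-1)) ∫_0^∞ (g(x+z) - g(x) - g'(x)z)/|z|^{α+2} dz`. -/
theorem integral_representations (α : ℝ) (hα : α ∈ Set.Ioo (0:ℝ) 1)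
    (g : ℝ → ℝ) (hg : ContDiff ℝ 2 g)
    (hgb : ∀ i : ℕ, i ≤ 2 → ∃ C, ∀ x, |iteratedDeriv i g x| ≤ C) (x : ℝ) :
    deriv (fun y => WM α g y) x =
      (Real.Gamma (-α - 1))⁻¹ *
        ∫ z in Set.Iio (0:ℝ), (g (x + z) - g x - deriv g x * z) / |z| ^ (α + 2) ∧
    deriv (fun y => WMbar α g y) x =
      (Real.Gamma (-α - 1))⁻¹ *
        ∫ z in Set.Ioi (0:ℝ), (g (x + z) - g x - deriv g x * z) / |z| ^ (α + 2) := by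
  obtain ⟨hα0, hα1⟩ := hα
  -- bounds on g and its derivatives
  obtain ⟨C0, hC0'⟩ := hgb 0 (by norm_num)
  obtain ⟨C1, hC1'⟩ := hgb 1 (by norm_num)
  obtain ⟨C2, hC2'⟩ := hgb 2 (by norm_num)
  have hg0 : ∀ y, |g y| ≤ C0 := by simpa [iteratedDeriv_zero] using hC0'
  have hC1 : ∀ y, |deriv g y| ≤ C1 := by simpa [iteratedDeriv_one] using hC1'
  have hC2 : ∀ y, |deriv (deriv g) y| ≤ C2 := by
    intro y; have h := hC2' y
    rwa [iteratedDeriv_succ, iteratedDeriv_one] at h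
  have hC0n : 0 ≤ C0 := le_trans (abs_nonneg _) (hg0 0)
  have hC1n : 0 ≤ C1 := le_trans (abs_nonneg _) (hC1 0)
  have hC2n : 0 ≤ C2 := le_trans (abs_nonneg _) (hC2 0)
  have diffg : Differentiable ℝ g := hg.differentiable two_ne_zero
  have diffg' : Differentiable ℝ (deriv g) := by
    have h : ContDiff ℝ ((1:ℕ) + 1) g := by exact_mod_cast hg
    exact (contDiff_succ_iff_deriv.mp h).2.2.differentiable one_ne_zero
  have contg' : Continuous (deriv g) := diffg'.continuous
  -- Lipschitz estimates
  have lipg : ∀ a b : ℝ, |g a - g b| ≤ C1 * |a - b| := by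
    intro a b
    simpa [Real.norm_eq_abs] using
      convex_univ.norm_image_sub_le_of_norm_deriv_le (fun w _ => (diffg w))
        (fun w _ => by simpa [Real.norm_eq_abs] using hC1 w) (mem_univ b) (mem_univ a)
  have lipg' : ∀ a b : ℝ, |deriv g a - deriv g b| ≤ C2 * |a - b| := by
    intro a b
    simpa [Real.norm_eq_abs] using
      convex_univ.norm_image_sub_le_of_norm_deriv_le (fun w _ => (diffg' w))
        (fun w _ => by simpa [Real.norm_eq_abs] using hC2 w) (mem_univ b) (mem_univ a)
  -- the Taylor remainder
  set F : ℝ → ℝ := fun z => g (x + z) - g x - deriv g x * z with hFdef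
  have hFderiv : ∀ z, HasDerivAt F (deriv g (x + z) - deriv g x) z := by
    intro z
    have h1 : HasDerivAt (fun w : ℝ => g (x + w)) (deriv g (x + z)) z := by
      have := (diffg (x + z)).hasDerivAt.comp z ((hasDerivAt_id z).const_add x)
      exact this.congr_deriv (mul_one _)
    have h2 : HasDerivAt (fun w : ℝ => g x + deriv g x * w) (deriv g x) z := by
      simpa using ((hasDerivAt_id z).const_mul (deriv g x)).const_add (g x)
    have h3 := h1.sub h2
    have he : F = fun w : ℝ => g (x + w) - (g x + deriv g x * w) := by
      funext w; rw [hFdef]; ring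
    rw [he]
    exact h3
  have hF0 : F 0 = 0 := by simp [hFdef]
  have habsle : ∀ z : ℝ, ∀ w ∈ uIcc (0:ℝ) z, |w| ≤ |z| := by
    intro z w hw
    rcases le_total (0:ℝ) z with h | h
    · rw [uIcc_of_le h] at hw; rw [abs_of_nonneg hw.1, abs_of_nonneg h]; exact hw.2
    · rw [uIcc_of_ge h] at hw; rw [abs_of_nonpos hw.2, abs_of_nonpos h]; linarith [hw.1]
  have hFq : ∀ z : ℝ, |F z| ≤ C2 * |z| * |z| := by
    intro z
    have key := (convex_uIcc (0:ℝ) z).norm_image_sub_le_of_norm_hasDerivWithin_le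
      (f' := fun w => deriv g (x + w) - deriv g x)
      (fun w _ => (hFderiv w).hasDerivWithinAt)
      (fun w hw => by
        have h1 : |deriv g (x + w) - deriv g x| ≤ C2 * |w| := by
          simpa using lipg' (x + w) x
        have h2 : |w| ≤ |z| := habsle z w hw
        calc ‖deriv g (x + w) - deriv g x‖ = |deriv g (x + w) - deriv g x| := rfl
          _ ≤ C2 * |w| := h1
          _ ≤ C2 * |z| := by nlinarith)
      left_mem_uIcc right_mem_uIcc
    rw [hF0, sub_zero, sub_zero] at key
    calc |F z| = ‖F z‖ := rfl
      _ ≤ C2 * |z| * ‖z‖ := key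
      _ = C2 * |z| * |z| := rfl
  have hFlin : ∀ z : ℝ, |F z| ≤ 2 * C0 + C1 * |z| := by
    intro z
    have h1 : |g (x + z) - g x| ≤ 2 * C0 := by
      calc |g (x + z) - g x| ≤ |g (x + z)| + |g x| := abs_sub _ _
        _ ≤ 2 * C0 := by linarith [hg0 (x + z), hg0 x]
    have h2 : |deriv g x * z| ≤ C1 * |z| := by
      rw [abs_mul]
      exact mul_le_mul_of_nonneg_right (hC1 x) (abs_nonneg z)
    calc |F z| = |(g (x + z) - g x) - deriv g x * z| := by rw [hFdef]
      _ ≤ |g (x + z) - g x| + |deriv g x * z| := abs_sub _ _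
      _ ≤ 2 * C0 + C1 * |z| := by linarith
  -- generic division facts
  have habs_pos : ∀ z : ℝ, z ≠ 0 → (0:ℝ) < |z| := fun z hz => abs_pos.mpr hz
  have hdivle : ∀ n m d : ℝ, |n| ≤ m → 0 ≤ d → |n / d| ≤ m / d := by
    intro n m d h hd
    rcases eq_or_lt_of_le hd with h0 | h0
    · simp [← h0]
    · rw [abs_div, abs_of_pos h0]
      exact (div_le_div_iff_of_pos_right h0).mpr h
  -- the two integrands
  set A : ℝ → ℝ := fun z => (deriv g (x + z) - deriv g x) / |z| ^ (α + 1) with hAdef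
  set B : ℝ → ℝ := fun z => (g (x + z) - g x - deriv g x * z) / |z| ^ (α + 2) with hBdef
  have measA : Measurable A :=
    ((contg'.comp (continuous_const.add continuous_id)).sub continuous_const).measurable.div
      (meas_abs_rpow (α + 1) (by linarith))
  have measB : Measurable B :=
    (((hg.continuous.comp (continuous_const.add continuous_id)).sub continuous_const).sub
      (continuous_const.mul continuous_id)).measurable.div
      (meas_abs_rpow (α + 2) (by linarith))
  -- pointwise bounds for A
  have hAb1 : ∀ z : ℝ, z ≠ 0 → |z| ≤ 1 → |A z| ≤ C2 * |z| ^ (-α) := by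
    intro z hz _
    have hzp := habs_pos z hz
    have hnum : |deriv g (x + z) - deriv g x| ≤ C2 * |z| := by simpa using lipg' (x + z) x
    calc |A z| ≤ C2 * |z| / |z| ^ (α + 1) :=
        hdivle _ _ _ hnum (Real.rpow_nonneg (abs_nonneg z) _)
      _ = C2 * |z| ^ (-α) := by
          rw [mul_div_assoc, show -α = 1 - (α + 1) by ring, Real.rpow_sub hzp, Real.rpow_one]
  have hAb2 : ∀ z : ℝ, 1 ≤ |z| → |A z| ≤ (2 * C1) * |z| ^ (-α - 1) := by
    intro z hz
    have hzp : (0:ℝ) < |z| := lt_of_lt_of_le zero_lt_one hz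
    have hnum : |deriv g (x + z) - deriv g x| ≤ 2 * C1 := by
      calc |deriv g (x + z) - deriv g x| ≤ |deriv g (x + z)| + |deriv g x| := abs_sub _ _
        _ ≤ 2 * C1 := by linarith [hC1 (x + z), hC1 x]
    calc |A z| ≤ 2 * C1 / |z| ^ (α + 1) :=
        hdivle _ _ _ hnum (Real.rpow_nonneg (abs_nonneg z) _)
      _ = (2 * C1) * |z| ^ (-α - 1) := by
          rw [div_eq_mul_inv, ← Real.rpow_neg (abs_nonneg z),
            show -(α + 1) = -α - 1 by ring]
  -- pointwise bounds for B
  have hBb1 : ∀ z : ℝ, z ≠ 0 → |z| ≤ 1 → |B z| ≤ C2 * |z| ^ (-α) := by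
    intro z hz _
    have hzp := habs_pos z hz
    have h2 : |z| * |z| = |z| ^ ((2:ℝ)) := by
      rw [show ((2:ℝ)) = ((2:ℕ):ℝ) by norm_num, Real.rpow_natCast]; ring
    calc |B z| ≤ C2 * |z| * |z| / |z| ^ (α + 2) :=
        hdivle _ _ _ (hFq z) (Real.rpow_nonneg (abs_nonneg z) _)
      _ = C2 * (|z| ^ ((2:ℝ)) / |z| ^ (α + 2)) := by rw [mul_assoc, h2, mul_div_assoc]
      _ = C2 * |z| ^ (-α) := by
          rw [show -α = (2:ℝ) - (α + 2) by ring, Real.rpow_sub hzp]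
  have hBb2 : ∀ z : ℝ, 1 ≤ |z| → |B z| ≤ (2 * C0 + C1) * |z| ^ (-α - 1) := by
    intro z hz
    have hzp : (0:ℝ) < |z| := lt_of_lt_of_le zero_lt_one hz
    have e1 : (2 * C0 + C1 * |z|) / |z| ^ (α + 2)
        = 2 * C0 * |z| ^ (-α - 2) + C1 * |z| ^ (-α - 1) := by
      rw [add_div]
      congr 1
      · rw [div_eq_mul_inv, ← Real.rpow_neg (abs_nonneg z),
          show -(α + 2) = -α - 2 by ring]
      · rw [mul_div_assoc]
        congr 1
        rw [show -α - 1 = 1 - (α + 2) by ring, Real.rpow_sub hzp, Real.rpow_one]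
    have e2 : |z| ^ (-α - 2) ≤ |z| ^ (-α - 1) :=
      Real.rpow_le_rpow_of_exponent_le hz (by linarith)
    calc |B z| ≤ (2 * C0 + C1 * |z|) / |z| ^ (α + 2) :=
        hdivle _ _ _ (hFlin z) (Real.rpow_nonneg (abs_nonneg z) _)
      _ = 2 * C0 * |z| ^ (-α - 2) + C1 * |z| ^ (-α - 1) := e1
      _ ≤ (2 * C0 + C1) * |z| ^ (-α - 1) := by nlinarith [Real.rpow_nonneg (abs_nonneg z) (-α - 1)]
  -- integrability
  have intA := keyInt hα0 hα1 measA hAb1 hAb2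
  have intB := keyInt hα0 hα1 measB hBb1 hBb2
  -- the parametric integrand and its bound
  have measP : ∀ y : ℝ, Measurable fun z => (g (y + z) - g y) / |z| ^ (α + 1) := by
    intro y
    exact ((hg.continuous.comp (continuous_const.add continuous_id)).sub
      continuous_const).measurable.div (meas_abs_rpow (α + 1) (by linarith))
  have hPb1 : ∀ y : ℝ, ∀ z : ℝ, z ≠ 0 → |z| ≤ 1 →
      |(g (y + z) - g y) / |z| ^ (α + 1)| ≤ C1 * |z| ^ (-α) := by
    intro y z hz _
    have hzp := habs_pos z hz
    have hnum : |g (y + z) - g y| ≤ C1 * |z| := by simpa using lipg (y + z) y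
    calc |(g (y + z) - g y) / |z| ^ (α + 1)| ≤ C1 * |z| / |z| ^ (α + 1) :=
        hdivle _ _ _ hnum (Real.rpow_nonneg (abs_nonneg z) _)
      _ = C1 * |z| ^ (-α) := by
          rw [mul_div_assoc, show -α = 1 - (α + 1) by ring, Real.rpow_sub hzp, Real.rpow_one]
  have hPb2 : ∀ y : ℝ, ∀ z : ℝ, 1 ≤ |z| →
      |(g (y + z) - g y) / |z| ^ (α + 1)| ≤ (2 * C0) * |z| ^ (-α - 1) := by
    intro y z hz
    have hzp : (0:ℝ) < |z| := lt_of_lt_of_le zero_lt_one hz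
    have hnum : |g (y + z) - g y| ≤ 2 * C0 := by
      calc |g (y + z) - g y| ≤ |g (y + z)| + |g y| := abs_sub _ _
        _ ≤ 2 * C0 := by linarith [hg0 (y + z), hg0 y]
    calc |(g (y + z) - g y) / |z| ^ (α + 1)| ≤ 2 * C0 / |z| ^ (α + 1) :=
        hdivle _ _ _ hnum (Real.rpow_nonneg (abs_nonneg z) _)
      _ = (2 * C0) * |z| ^ (-α - 1) := by
          rw [div_eq_mul_inv, ← Real.rpow_neg (abs_nonneg z),
            show -(α + 1) = -α - 1 by ring]
  have intP : ∀ y : ℝ,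
      IntegrableOn (fun z => (g (y + z) - g y) / |z| ^ (α + 1)) (Set.Iio (0:ℝ)) ∧
      IntegrableOn (fun z => (g (y + z) - g y) / |z| ^ (α + 1)) (Set.Ioi (0:ℝ)) :=
    fun y => keyInt hα0 hα1 (measP y) (hPb1 y) (hPb2 y)
  -- dominating bound for the derivative of the parametric integrand
  set bnd : ℝ → ℝ := fun z => min (2 * C1) (C2 * |z|) / |z| ^ (α + 1) with hbnddef
  have hbnd_nonneg : ∀ z, 0 ≤ bnd z := by
    intro z
    apply div_nonneg _ (Real.rpow_nonneg (abs_nonneg z) _)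
    exact le_min (by linarith) (by positivity)
  have measbnd : Measurable bnd :=
    (measurable_const.min (measurable_const.mul measurable_abs)).div
      (meas_abs_rpow (α + 1) (by linarith))
  have hbnd_le : ∀ z : ℝ, z ≠ 0 → ∀ m : ℝ, min (2 * C1) (C2 * |z|) ≤ m →
      bnd z ≤ m / |z| ^ (α + 1) := by
    intro z hz m hm
    rw [hbnddef]
    exact (div_le_div_iff_of_pos_right (Real.rpow_pos_of_pos (habs_pos z hz) _)).mpr hm
  have hbndb1 : ∀ z : ℝ, z ≠ 0 → |z| ≤ 1 → |bnd z| ≤ C2 * |z| ^ (-α) := by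
    intro z hz _
    have hzp := habs_pos z hz
    rw [abs_of_nonneg (hbnd_nonneg z)]
    calc bnd z ≤ C2 * |z| / |z| ^ (α + 1) := hbnd_le z hz _ (min_le_right _ _)
      _ = C2 * |z| ^ (-α) := by
          rw [mul_div_assoc, show -α = 1 - (α + 1) by ring, Real.rpow_sub hzp, Real.rpow_one]
  have hbndb2 : ∀ z : ℝ, 1 ≤ |z| → |bnd z| ≤ (2 * C1) * |z| ^ (-α - 1) := by
    intro z hz
    have hzp : (0:ℝ) < |z| := lt_of_lt_of_le zero_lt_one hz
    have hz0 : z ≠ 0 := by intro h; rw [h] at hzp; simp at hzp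
    rw [abs_of_nonneg (hbnd_nonneg z)]
    calc bnd z ≤ 2 * C1 / |z| ^ (α + 1) := hbnd_le z hz0 _ (min_le_left _ _)
      _ = (2 * C1) * |z| ^ (-α - 1) := by
          rw [div_eq_mul_inv, ← Real.rpow_neg (abs_nonneg z), show -(α + 1) = -α - 1 by ring]
  have intbnd := keyInt hα0 hα1 measbnd hbndb1 hbndb2
  have hdom : ∀ y z : ℝ, |(deriv g (y + z) - deriv g y) / |z| ^ (α + 1)| ≤ bnd z := by
    intro y z
    rcases eq_or_ne z 0 with rfl | hz
    · simp [hbnddef, Real.zero_rpow (ne_of_gt (show (0:ℝ) < α + 1 by linarith))]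
    · have hnum : |deriv g (y + z) - deriv g y| ≤ min (2 * C1) (C2 * |z|) := by
        apply le_min
        · calc |deriv g (y + z) - deriv g y| ≤ |deriv g (y + z)| + |deriv g y| := abs_sub _ _
            _ ≤ 2 * C1 := by linarith [hC1 (y + z), hC1 y]
        · simpa using lipg' (y + z) y
      rw [hbnddef]
      exact hdivle _ _ _ hnum (Real.rpow_nonneg (abs_nonneg z) _)
  -- differentiation under the integral sign
  have DUIS : ∀ s : Set ℝ,
      IntegrableOn (fun z => (g (x + z) - g x) / |z| ^ (α + 1)) s →
      IntegrableOn bnd s →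
      HasDerivAt (fun y => ∫ z in s, (g (y + z) - g y) / |z| ^ (α + 1))
        (∫ z in s, A z) x := by
    intro s hPint hbint
    have h := hasDerivAt_integral_of_dominated_loc_of_deriv_le
      (μ := volume.restrict s)
      (F := fun y z => (g (y + z) - g y) / |z| ^ (α + 1))
      (F' := fun y z => (deriv g (y + z) - deriv g y) / |z| ^ (α + 1))
      (x₀ := x) (bound := bnd) (Metric.ball_mem_nhds x zero_lt_one)
      (Eventually.of_forall fun y => (measP y).aestronglyMeasurable)
      hPint
      measA.aestronglyMeasurable
      (Eventually.of_forall fun z y _ => hdom y z)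
      hbint
      (Eventually.of_forall fun z y _ => by
        have h1 : HasDerivAt (fun y : ℝ => g (y + z)) (deriv g (y + z)) y := by
          exact ((diffg (y + z)).hasDerivAt.comp y ((hasDerivAt_id y).add_const z)).congr_deriv (mul_one _)
        exact (h1.sub (diffg y).hasDerivAt).div_const _)
    simpa only [hAdef] using h.2
  have derivWM : deriv (fun y => WM α g y) x
      = (Real.Gamma (-α))⁻¹ * ∫ z in Set.Iio (0:ℝ), A z := by
    have h := (DUIS (Set.Iio 0) (intP x).1 intbnd.1).const_mul (Real.Gamma (-α))⁻¹
    exact h.deriv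
  have derivWMbar : deriv (fun y => WMbar α g y) x
      = -(Real.Gamma (-α))⁻¹ * ∫ z in Set.Ioi (0:ℝ), A z := by
    have h := (DUIS (Set.Ioi 0) (intP x).2 intbnd.2).const_mul (-(Real.Gamma (-α))⁻¹)
    exact h.deriv
  -- the auxiliary function for integration by parts
  set H : ℝ → ℝ := fun z => F z / |z| ^ (α + 1) with hHdef
  have hH0 : H 0 = 0 := by simp [hHdef, hF0]
  have hHbig : ∀ z : ℝ, 1 ≤ |z| → |H z| ≤ (2 * C0 + C1) * |z| ^ (-α) := by
    intro z hz
    have hzp : (0:ℝ) < |z| := lt_of_lt_of_le zero_lt_one hz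
    have e1 : (2 * C0 + C1 * |z|) / |z| ^ (α + 1)
        = 2 * C0 * |z| ^ (-α - 1) + C1 * |z| ^ (-α) := by
      rw [add_div]
      congr 1
      · rw [div_eq_mul_inv, ← Real.rpow_neg (abs_nonneg z), show -(α + 1) = -α - 1 by ring]
      · rw [mul_div_assoc]
        congr 1
        rw [show -α = 1 - (α + 1) by ring, Real.rpow_sub hzp, Real.rpow_one]
    have e2 : |z| ^ (-α - 1) ≤ |z| ^ (-α) :=
      Real.rpow_le_rpow_of_exponent_le hz (by linarith)
    calc |H z| ≤ (2 * C0 + C1 * |z|) / |z| ^ (α + 1) :=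
        hdivle _ _ _ (hFlin z) (Real.rpow_nonneg (abs_nonneg z) _)
      _ = 2 * C0 * |z| ^ (-α - 1) + C1 * |z| ^ (-α) := e1
      _ ≤ (2 * C0 + C1) * |z| ^ (-α) := by nlinarith [Real.rpow_nonneg (abs_nonneg z) (-α)]
  have hHsmall : ∀ z : ℝ, |H z| ≤ C2 * |z| ^ (1 - α) := by
    intro z
    rcases eq_or_ne z 0 with rfl | hz
    · rw [hH0]
      simp [Real.zero_rpow (ne_of_gt (show (0:ℝ) < 1 - α by linarith))]
    · have hzp := habs_pos z hz
      have h2 : |z| * |z| = |z| ^ ((2:ℝ)) := by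
        rw [show ((2:ℝ)) = ((2:ℕ):ℝ) by norm_num, Real.rpow_natCast]; ring
      calc |H z| ≤ C2 * |z| * |z| / |z| ^ (α + 1) :=
          hdivle _ _ _ (hFq z) (Real.rpow_nonneg (abs_nonneg z) _)
        _ = C2 * (|z| ^ ((2:ℝ)) / |z| ^ (α + 1)) := by rw [mul_assoc, h2, mul_div_assoc]
        _ = C2 * |z| ^ (1 - α) := by
            rw [show (1:ℝ) - α = 2 - (α + 1) by ring, Real.rpow_sub hzp]
  have hHcont0 : Tendsto H (nhds 0) (nhds 0) := by
    apply squeeze_zero_norm hHsmall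
    have h := ((continuous_abs.rpow_const
      (fun _ => Or.inr (show (0:ℝ) ≤ 1 - α by linarith))).tendsto 0).const_mul C2
    simpa [Real.zero_rpow (ne_of_gt (show (0:ℝ) < 1 - α by linarith))] using h
  have hcontAt : ContinuousAt H 0 := by
    show Tendsto H (nhds 0) (nhds (H 0))
    rw [hH0]; exact hHcont0
  have hHtop : Tendsto H atTop (nhds 0) := by
    refine squeeze_zero_norm' (a := fun z : ℝ => (2 * C0 + C1) * |z| ^ (-α)) ?_ ?_
    · filter_upwards [eventually_ge_atTop (1:ℝ)] with z hz
      exact hHbig z (by rw [abs_of_nonneg (by linarith)]; exact hz)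
    · have h := ((tendsto_rpow_neg_atTop hα0).comp tendsto_abs_atTop_atTop).const_mul
        (2 * C0 + C1)
      simpa using h
  have hHbot : Tendsto H atBot (nhds 0) := by
    refine squeeze_zero_norm' (a := fun z : ℝ => (2 * C0 + C1) * |z| ^ (-α)) ?_ ?_
    · filter_upwards [eventually_le_atBot (-1:ℝ)] with z hz
      exact hHbig z (by rw [abs_of_nonpos (by linarith)]; linarith)
    · have h := ((tendsto_rpow_neg_atTop hα0).comp tendsto_abs_atBot_atTop).const_mul
        (2 * C0 + C1)
      simpa using h
  -- derivative of H on each half line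
  have hHdIoi : ∀ z ∈ Set.Ioi (0:ℝ), HasDerivAt H (A z - (α + 1) * B z) z := by
    intro z hz
    rw [mem_Ioi] at hz
    have hpow : HasDerivAt (fun w : ℝ => w ^ (-(α + 1))) (-(α + 1) * z ^ (-(α + 1) - 1)) z :=
      Real.hasDerivAt_rpow_const (Or.inl (ne_of_gt hz))
    have hmul := (hFderiv z).mul hpow
    have heq : H =ᶠ[nhds z] fun w => F w * w ^ (-(α + 1)) := by
      filter_upwards [Ioi_mem_nhds hz] with w hw
      rw [hHdef]
      simp only []
      rw [abs_of_pos hw, Real.rpow_neg hw.le, div_eq_mul_inv]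
    have hd := hmul.congr_of_eventuallyEq heq
    refine hd.congr_deriv ?_
    simp only [hAdef, hBdef, hFdef]
    rw [abs_of_pos hz, show -(α + 1) - 1 = -(α + 2) by ring,
      Real.rpow_neg hz.le (α + 1), Real.rpow_neg hz.le (α + 2),
      div_eq_mul_inv, div_eq_mul_inv]
    ring
  have hHdIio : ∀ z ∈ Set.Iio (0:ℝ), HasDerivAt H (A z + (α + 1) * B z) z := by
    intro z hz
    rw [mem_Iio] at hz
    have hneg : (0:ℝ) < -z := by linarith
    have hpow0 : HasDerivAt (fun w : ℝ => w ^ (-(α + 1)))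
        (-(α + 1) * (-z) ^ (-(α + 1) - 1)) (-z) :=
      Real.hasDerivAt_rpow_const (Or.inl (ne_of_gt hneg))
    have hpow : HasDerivAt (fun w : ℝ => (-w) ^ (-(α + 1))) ((α + 1) * (-z) ^ (-(α + 2))) z := by
      have h : HasDerivAt (fun w : ℝ => (-w) ^ (-(α + 1))) (-(α + 1) * (-z) ^ (-(α + 1) - 1) * -1) z :=
        hpow0.comp z (hasDerivAt_neg z)
      convert h using 1
      rw [show -(α + 1) - 1 = -(α + 2) by ring]
      ring
    have hmul := (hFderiv z).mul hpow
    have heq : H =ᶠ[nhds z] fun w => F w * (-w) ^ (-(α + 1)) := by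
      filter_upwards [Iio_mem_nhds hz] with w hw
      rw [hHdef]
      simp only []
      rw [abs_of_neg hw, Real.rpow_neg (neg_pos.mpr hw).le, div_eq_mul_inv]
    have hd := hmul.congr_of_eventuallyEq heq
    refine hd.congr_deriv ?_
    simp only [hAdef, hBdef, hFdef]
    rw [abs_of_neg hz,
      Real.rpow_neg (by linarith : (0:ℝ) ≤ -z) (α + 1),
      Real.rpow_neg (by linarith : (0:ℝ) ≤ -z) (α + 2),
      div_eq_mul_inv, div_eq_mul_inv]
    ring
  -- integration by parts on (0, ∞)
  have hIBPIoi : ∫ z in Set.Ioi (0:ℝ), A z = (α + 1) * ∫ z in Set.Ioi (0:ℝ), B z := by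
    have hint : IntegrableOn (fun z => A z - (α + 1) * B z) (Set.Ioi (0:ℝ)) :=
      intA.2.sub (intB.2.const_mul (α + 1))
    have h0 := integral_Ioi_of_hasDerivAt_of_tendsto hcontAt.continuousWithinAt
      hHdIoi hint hHtop
    rw [integral_sub intA.2 (intB.2.const_mul (α + 1)), integral_const_mul, hH0] at h0
    simp only [zero_sub, neg_zero] at h0
    linarith
  -- integration by parts on (-∞, 0)
  have hIBPIio : ∫ z in Set.Iio (0:ℝ), A z = -((α + 1) * ∫ z in Set.Iio (0:ℝ), B z) := by
    have hint : IntegrableOn (fun z => A z + (α + 1) * B z) (Set.Iic (0:ℝ)) := by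
      rw [integrableOn_Iic_iff_integrableOn_Iio]
      exact intA.1.add (intB.1.const_mul (α + 1))
    have h0 := integral_Iic_of_hasDerivAt_of_tendsto hcontAt.continuousWithinAt
      hHdIio hint hHbot
    have hswap : ∫ z in Set.Iio (0:ℝ), (A z + (α + 1) * B z)
        = ∫ z in Set.Iic (0:ℝ), (A z + (α + 1) * B z) :=
      setIntegral_congr_set Iio_ae_eq_Iic
    rw [← hswap] at h0
    rw [integral_add intA.1 (intB.1.const_mul (α + 1)), integral_const_mul, hH0] at h0
    simp only [sub_zero] at h0
    linarith
  -- Gamma function recurrence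
  have hΓne' : Real.Gamma (-α - 1) ≠ 0 := by
    apply Real.Gamma_ne_zero
    intro m hm
    rcases m with _ | _ | n
    · simp at hm; linarith
    · simp at hm; linarith
    · have : (0:ℝ) ≤ (n:ℝ) := Nat.cast_nonneg n
      push_cast at hm
      linarith
  have hΓrec : Real.Gamma (-α) = (-α - 1) * Real.Gamma (-α - 1) := by
    have hne : -α - 1 ≠ 0 := ne_of_lt (by linarith)
    have h := Real.Gamma_add_one hne
    rwa [show -α - 1 + 1 = -α by ring] at h
  have hΓinv : (Real.Gamma (-α - 1))⁻¹ = -(α + 1) * (Real.Gamma (-α))⁻¹ := by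
    have hne : -α - 1 ≠ 0 := ne_of_lt (by linarith)
    rw [hΓrec, mul_inv, ← mul_assoc, show -(α + 1) = -α - 1 by ring,
      mul_inv_cancel₀ hne, one_mul]
  constructor
  · rw [derivWM, hIBPIio, hΓinv]
    ring
  · rw [derivWMbar, hIBPIoi, hΓinv]
    ring
end
end
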